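/- Let K be a quartic number field in which a prime p splits completely, i.e., p·O_K = p_1·p_2·p_3·p_4 with distinct prime ideals of residue degree 1, and suppose p ∈ {2, 3}. Then p divides [O_K : ℤ[θ]] for every θ ∈ O_K with ℚ(θ) = K; in particular K is not monogenic. -/

import Mathlib

/-!
If `p` does not divide the index of `ℤ[θ]` in a ring `R`, then `ℤ[θ]` maps onto every residue
field `R/P ≅ 𝔽_p`, so a prime `P` of norm `p` is determined by the residue of `θ` modulo `P`.
There are only `p` such residues, hence at most `p` primes of norm `p`. Four of them with
`p ≤ 3` therefore force `p ∣ [𝓞 K : ℤ[θ]]` for every `θ`, and `𝓞 K = ℤ[θ]` is impossible.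
-/

open Polynomial NumberField

noncomputable def zIndex {K : Type} [Field K] [NumberField K] (θ : 𝓞 K) : ℕ :=
  ((Algebra.adjoin ℤ {θ}).toSubring.toAddSubgroup).index

section

variable {R : Type*} [CommRing R] {p : ℕ} [Fact p.Prime]

theorem exists_ringHom_zmod_ker_eq {I : Ideal R} (hI : Nat.card (R ⧸ I) = p) :
    ∃ φ : R →+* ZMod p, RingHom.ker φ = I := by
  have : Finite (R ⧸ I) := Nat.finite_of_card_ne_zero (hI ▸ (Fact.out : p.Prime).ne_zero)
  have : Fintype (R ⧸ I) := Fintype.ofFinite _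
  let e : ZMod p ≃+* R ⧸ I := ZMod.ringEquivOfPrime _ Fact.out (Fintype.card_eq_nat_card.trans hI)
  refine ⟨(e.symm : R ⧸ I →+* ZMod p).comp (Ideal.Quotient.mk I), ?_⟩
  rw [RingHom.ker_comp_of_injective _ e.symm.injective, Ideal.mk_ker]

/-- Multiplication by the index `n` sends `R` into `S`, and `n` is invertible in `ZMod p`. -/
theorem RingHom.eq_of_eqOn_of_not_dvd_index {S : Subring R} (hS : ¬ p ∣ S.toAddSubgroup.index)
    {f g : R →+* ZMod p} (h : ∀ s ∈ S, f s = g s) : f = g := by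
  ext x
  have hx : S.toAddSubgroup.index • x ∈ S := S.toAddSubgroup.nsmul_index_mem x
  have hn : (S.toAddSubgroup.index : ZMod p) ≠ 0 := (ZMod.natCast_eq_zero_iff _ _).not.2 hS
  refine mul_left_cancel₀ hn ?_
  simpa only [nsmul_eq_mul, map_mul, map_natCast] using h _ hx

theorem card_le_of_not_dvd_index_adjoin {θ : R}
    (hθ : ¬ p ∣ (Algebra.adjoin ℤ {θ}).toSubring.toAddSubgroup.index)
    {ι : Type*} [Fintype ι] {P : ι → Ideal R} (hP : Function.Injective P)
    (hcard : ∀ i, Nat.card (R ⧸ P i) = p) : Fintype.card ι ≤ p := by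
  choose φ hφ using fun i => exists_ringHom_zmod_ker_eq (hcard i)
  have hext {i j : ι} (h : φ i θ = φ j θ) : φ i = φ j := by
    refine RingHom.eq_of_eqOn_of_not_dvd_index hθ fun s hs => ?_
    have hle : Algebra.adjoin ℤ {θ} ≤ AlgHom.equalizer (φ i).toIntAlgHom (φ j).toIntAlgHom :=
      Algebra.adjoin_le (Set.singleton_subset_iff.2 h)
    exact hle hs
  have hinj : Function.Injective fun i => φ i θ := fun i j h => hP (by rw [← hφ, ← hφ, hext h])
  simpa only [ZMod.card] using Fintype.card_le_of_injective _ hinj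

end

theorem zIndex_eq_one_of_adjoin_eq_top {K : Type} [Field K] [NumberField K] {θ : 𝓞 K}
    (hθ : Algebra.adjoin ℤ {θ} = ⊤) : zIndex θ = 1 := by
  simp [zIndex, hθ]

theorem stmt16_general (K : Type) [Field K] [NumberField K]
    (p : ℕ) (hp : p.Prime) (hp23 : p = 2 ∨ p = 3)
    (P₁ P₂ P₃ P₄ : Ideal (𝓞 K))
    (hne : P₁ ≠ P₂ ∧ P₁ ≠ P₃ ∧ P₁ ≠ P₄ ∧ P₂ ≠ P₃ ∧ P₂ ≠ P₄ ∧ P₃ ≠ P₄)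
    (hN₁ : Ideal.absNorm P₁ = p) (hN₂ : Ideal.absNorm P₂ = p)
    (hN₃ : Ideal.absNorm P₃ = p) (hN₄ : Ideal.absNorm P₄ = p) :
    (∀ θ : 𝓞 K, Algebra.adjoin ℚ {(θ : K)} = ⊤ → p ∣ zIndex θ) ∧
      ¬ ∃ θ : 𝓞 K, Algebra.adjoin ℤ {θ} = ⊤ := by
  have : Fact p.Prime := ⟨hp⟩
  obtain ⟨h12, h13, h14, h23, h24, h34⟩ := hne
  have hinj : Function.Injective ![P₁, P₂, P₃, P₄] := by
    intro i j
    fin_cases i <;> fin_cases j <;> simp [*, Ne.symm]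
  have hcard : ∀ i, Nat.card (𝓞 K ⧸ ![P₁, P₂, P₃, P₄] i) = p := by
    simp only [← Submodule.cardQuot_apply, ← Ideal.absNorm_apply, Fin.forall_fin_succ]
    simp [hN₁, hN₂, hN₃, hN₄]
  have hdvd (θ : 𝓞 K) : p ∣ zIndex θ := by
    by_contra h
    have := card_le_of_not_dvd_index_adjoin h hinj hcard
    rw [Fintype.card_fin] at this
    omega
  refine ⟨fun θ _ => hdvd θ, fun ⟨θ, hθ⟩ => ?_⟩
  exact hp.not_dvd_one (zIndex_eq_one_of_adjoin_eq_top hθ ▸ hdvd θ)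

theorem stmt16 (K : Type) [Field K] [NumberField K]
    (hdeg : Module.finrank ℚ K = 4)
    (p : ℕ) (hp : p.Prime) (hp23 : p = 2 ∨ p = 3)
    (P₁ P₂ P₃ P₄ : Ideal (𝓞 K))
    (h₁ : P₁.IsPrime) (h₂ : P₂.IsPrime) (h₃ : P₃.IsPrime) (h₄ : P₄.IsPrime)
    (hne : P₁ ≠ P₂ ∧ P₁ ≠ P₃ ∧ P₁ ≠ P₄ ∧ P₂ ≠ P₃ ∧ P₂ ≠ P₄ ∧ P₃ ≠ P₄)
    (hsplit : Ideal.span {(p : 𝓞 K)} = P₁ * P₂ * P₃ * P₄)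
    (hN₁ : Ideal.absNorm P₁ = p) (hN₂ : Ideal.absNorm P₂ = p)
    (hN₃ : Ideal.absNorm P₃ = p) (hN₄ : Ideal.absNorm P₄ = p) :
    (∀ θ : 𝓞 K, Algebra.adjoin ℚ {(θ : K)} = ⊤ → p ∣ zIndex θ) ∧
      ¬ ∃ θ : 𝓞 K, Algebra.adjoin ℤ {θ} = ⊤ :=
  stmt16_general K p hp hp23 P₁ P₂ P₃ P₄ hne hN₁ hN₂ hN₃ hN₄
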